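/- Let T_m denote the number of game walks of length m. Then T_1 = 1, and for every m ≥ 2, T_m = Σ_{k ≥ 4} Σ_{(m_1,…,m_k)} T_{m_1} · T_{m_2} · ⋯ · T_{m_k}, where the inner sum ranges over all compositions of m − 1 into k positive parts, i.e., all k-tuples (m_1,…,m_k) of positive integers with m_1 + ⋯ + m_k = m − 1 (only finitely many summands are nonzero). -/

import Mathlib

/-- A game walk: a finite sequence of integers each equal to `1` or at most
`-3`, all of whose partial sums are at least `1`, and whose total sum is `1`. -/
def IsGameWalk (D : List ℤ) : Prop :=
  (∀ d ∈ D, d = 1 ∨ d ≤ -3) ∧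
  (∀ k, 1 ≤ k → k ≤ D.length → 1 ≤ (D.take k).sum) ∧
  D.sum = 1

/-- `T m` is the number of game walks of length `m`. -/
noncomputable def T (m : ℕ) : ℕ :=
  Nat.card {D : List ℤ // D.length = m ∧ IsGameWalk D}

/-!
A game walk of length `n + 1 ≥ 2` cannot end with a step `+1` (the partial sum before it would be
`0`), so it ends with a step `1 - k ≤ -3`. What precedes it is a path with positive prefix sums
ending at height `k ≥ 4`. Since every up-step is exactly `+1`, cutting such a path after the last
time its partial sum is at most `1` splits off a game walk and leaves a path of the same kind ending
at height `k - 1`; iterating, the path splits uniquely into `k` game walks. Conversely any `k ≥ 4`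
game walks followed by the step `1 - k` form a game walk. Sorting by the lengths of the `k` pieces,
a composition of `n`, gives the recurrence.
-/

open List

-- The middle conjunct of `IsGameWalk`: for a game walk `hD`, `hD.2 : PrefixSumsPos D ∧ D.sum = 1`.
def PrefixSumsPos (D : List ℤ) : Prop :=
  ∀ k, 1 ≤ k → k ≤ D.length → 1 ≤ (D.take k).sum

namespace PrefixSumsPos

theorem sum_lt_sum_take_append {A B : List ℤ} (hB : PrefixSumsPos B) {k : ℕ}
    (hk : A.length < k) (hk' : k ≤ (A ++ B).length) : A.sum < ((A ++ B).take k).sum := by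
  obtain ⟨s, rfl⟩ := Nat.exists_eq_add_of_lt hk
  rw [length_append] at hk'
  rw [add_assoc, take_length_add_append, sum_append]
  have := hB (s + 1) (by omega) (by omega)
  omega

theorem append {A B : List ℤ} (hA : PrefixSumsPos A) (hB : PrefixSumsPos B) (hA₀ : 0 ≤ A.sum) :
    PrefixSumsPos (A ++ B) := by
  intro k hk hk'
  rcases le_or_gt k A.length with hkA | hkA
  · rw [take_append_of_le_length hkA]
    exact hA k hk hkA
  · linarith [sum_lt_sum_take_append hB hkA hk']

theorem of_append {A B : List ℤ} (h : PrefixSumsPos (A ++ B)) : PrefixSumsPos A := by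
  intro k hk hkA
  simpa [take_append_of_le_length hkA] using h k hk (by rw [length_append]; omega)

theorem append_singleton_iff {A : List ℤ} {d : ℤ} :
    PrefixSumsPos (A ++ [d]) ↔ PrefixSumsPos A ∧ 1 ≤ A.sum + d := by
  refine ⟨fun h => ⟨h.of_append, by simpa using h (A.length + 1) (by omega) (by simp)⟩, ?_⟩
  rintro ⟨hA, hd⟩ k hk hk'
  rcases le_or_gt k A.length with hkA | hkA
  · rw [take_append_of_le_length hkA]
    exact hA k hk hkA
  · rw [length_append, length_singleton] at hk'
    rw [take_of_length_le (by rw [length_append, length_singleton]; omega)]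
    simpa using hd

theorem flatten {L : List (List ℤ)} (hL : ∀ W ∈ L, PrefixSumsPos W ∧ W.sum = 1) :
    PrefixSumsPos L.flatten := by
  induction L with
  | nil => intro k hk hk'; rw [flatten_nil, length_nil] at hk'; omega
  | cons W L ih =>
    have hW := hL W mem_cons_self
    exact hW.1.append (ih fun V hV => hL V (mem_cons_of_mem W hV)) (by omega)

end PrefixSumsPos

theorem sum_flatten_of_sum_eq_one {L : List (List ℤ)} (hL : ∀ W ∈ L, W.sum = 1) :
    L.flatten.sum = L.length := by
  rw [sum_flatten, map_congr_left hL, map_const', sum_replicate, nsmul_one]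

theorem length_le_of_append_eq_of_sum_eq_one {W W' R R' : List ℤ} (hW : W.sum = 1)
    (hR : PrefixSumsPos R) (hW' : W'.sum = 1) (h : W ++ R = W' ++ R') :
    W'.length ≤ W.length := by
  by_contra! hlt
  have hW'_take : (W ++ R).take W'.length = W' := by rw [h, take_left]
  have := hR.sum_lt_sum_take_append hlt (by rw [h, length_append]; omega)
  rw [hW'_take] at this
  omega

theorem eq_of_flatten_eq_of_sum_eq_one {L L' : List (List ℤ)}
    (hL : ∀ W ∈ L, PrefixSumsPos W ∧ W.sum = 1) (hL' : ∀ W ∈ L', PrefixSumsPos W ∧ W.sum = 1)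
    (h : L.flatten = L'.flatten) : L = L' := by
  induction L generalizing L' with
  | nil =>
    cases L' with
    | nil => rfl
    | cons W' L' =>
      rw [flatten_nil, flatten_cons, nil_eq, append_eq_nil_iff] at h
      simpa [h.1] using (hL' W' mem_cons_self).2
  | cons W L ih =>
    cases L' with
    | nil =>
      rw [flatten_nil, flatten_cons, append_eq_nil_iff] at h
      simpa [h.1] using (hL W mem_cons_self).2
    | cons W' L' =>
      have hW := hL W mem_cons_self
      have hW' := hL' W' mem_cons_self
      have hR := PrefixSumsPos.flatten fun V hV => hL V (mem_cons_of_mem W hV)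
      have hR' := PrefixSumsPos.flatten fun V hV => hL' V (mem_cons_of_mem W' hV)
      rw [flatten_cons, flatten_cons] at h
      have hlen : W.length = W'.length := le_antisymm
        (length_le_of_append_eq_of_sum_eq_one hW'.2 hR' hW.2 h.symm)
        (length_le_of_append_eq_of_sum_eq_one hW.2 hR hW'.2 h)
      obtain ⟨rfl, hrest⟩ := append_inj h hlen
      rw [ih (fun V hV => hL V (mem_cons_of_mem W hV)) (fun V hV => hL' V (mem_cons_of_mem W hV))
        hrest]

theorem exists_flatten_eq_of_prefixSumsPos {k : ℕ} (hk : 1 ≤ k) {D : List ℤ}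
    (hstep : ∀ d ∈ D, d ≤ 1) (hpos : PrefixSumsPos D) (hsum : D.sum = k) :
    ∃ L : List (List ℤ), L.length = k ∧ (∀ W ∈ L, PrefixSumsPos W ∧ W.sum = 1) ∧
      L.flatten = D := by
  induction k, hk using Nat.le_induction generalizing D with
  | base => exact ⟨[D], rfl, by simpa using ⟨hpos, hsum⟩, by simp⟩
  | succ k hk ih =>
    obtain ⟨d, D', hD⟩ := exists_cons_of_ne_nil (show D ≠ [] by rintro rfl; rw [sum_nil] at hsum; omega)
    have hfirst : (D.take 1).sum ≤ 1 := by simpa [hD] using hstep d (by simp [hD])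
    have hlen : 1 ≤ D.length := by simp [hD]
    set t := Nat.findGreatest (fun t => (D.take t).sum ≤ 1) D.length
    have ht₁ : 1 ≤ t := Nat.le_findGreatest hlen hfirst
    have hsum_t : (D.take t).sum = 1 :=
      le_antisymm (Nat.findGreatest_spec (P := fun t => (D.take t).sum ≤ 1) hlen hfirst)
        (hpos t ht₁ (Nat.findGreatest_le _))
    have hsum_gt : ∀ q, t < q → q ≤ D.length → 2 ≤ (D.take q).sum := fun q hq hqD => by
      have := Nat.findGreatest_is_greatest hq hqD
      push Not at this
      omega
    have hsplit := take_append_drop t D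
    have hsum_drop : (D.drop t).sum = k := by
      have := congrArg sum hsplit
      rw [sum_append, hsum_t, hsum] at this
      push_cast at this
      omega
    have hpos_drop : PrefixSumsPos (D.drop t) := fun s hs hsD => by
      have := hsum_gt (t + s) (by omega) (by rw [length_drop] at hsD; omega)
      rw [take_add, sum_append, hsum_t] at this
      omega
    obtain ⟨L, hLlen, hL, hLD⟩ :=
      ih (fun x hx => hstep x (drop_subset _ _ hx)) hpos_drop hsum_drop
    refine ⟨D.take t :: L, by rw [length_cons, hLlen], ?_, by rw [flatten_cons, hLD, hsplit]⟩
    rintro W (_ | ⟨_, hW⟩)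
    · rw [← hsplit] at hpos
      exact ⟨hpos.of_append, hsum_t⟩
    · exact hL W hW

section ListsOfLengths

variable {α : Type*}

def listsOfLengthsEquiv (P : List α → Prop) (b : List ℕ) :
    {L : List (List α) // L.map length = b ∧ ∀ W ∈ L, P W} ≃
      ∀ i : Fin b.length, {W : List α // W.length = b[(i : ℕ)] ∧ P W} where
  toFun L i :=
    have hi : (i : ℕ) < L.1.length := by simpa [← L.2.1] using i.2
    ⟨L.1[i], by simp [← L.2.1], L.2.2 _ (getElem_mem hi)⟩
  invFun w := ⟨ofFn fun i => (w i).1,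
    by simp only [map_ofFn, Function.comp_def, (w _).2.1, ofFn_getElem],
    by simp [mem_ofFn, (w _).2.2]⟩
  left_inv L := Subtype.ext <| ext_getElem (by simp [← L.2.1]) (by simp)
  right_inv w := by funext i; ext1; simp

theorem card_listsOfLengths (P : List α → Prop) (b : List ℕ) :
    Nat.card {L : List (List α) // L.map length = b ∧ ∀ W ∈ L, P W} =
      (b.map fun m => Nat.card {W : List α // W.length = m ∧ P W}).prod := by
  rw [Nat.card_congr (listsOfLengthsEquiv P b), Nat.card_pi]
  exact Fin.prod_univ_fun_getElem b fun m => Nat.card {W : List α // W.length = m ∧ P W}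

instance finite_listsOfLengths (P : List α → Prop) (b : List ℕ)
    [∀ m, Finite {W : List α // W.length = m ∧ P W}] :
    Finite {L : List (List α) // L.map length = b ∧ ∀ W ∈ L, P W} :=
  .of_equiv _ (listsOfLengthsEquiv P b).symm

end ListsOfLengths

theorem IsGameWalk.mem_Icc {D : List ℤ} (hD : IsGameWalk D) {d : ℤ} (hd : d ∈ D) :
    d ∈ Set.Icc (2 - D.length : ℤ) 1 := by
  have hle : ∀ x ∈ D, x ≤ 1 := fun x hx => by rcases hD.1 x hx with h | h <;> omega
  classical
  have hrest : (D.erase d).sum ≤ (D.erase d).length := by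
    simpa using sum_le_card_nsmul _ 1 fun x hx => hle x (mem_of_mem_erase hx)
  have hsplit : d + (D.erase d).sum = 1 := (sum_erase hd).trans hD.2.2
  rw [length_erase_of_mem hd] at hrest
  have := length_pos_of_mem hd
  exact ⟨by omega, hle d hd⟩

instance finite_gameWalks (m : ℕ) : Finite {D : List ℤ // D.length = m ∧ IsGameWalk D} := by
  refine Set.Finite.subset
    ((Set.Finite.pi' (ι := Fin m) fun _ => Set.finite_Icc (2 - m : ℤ) 1).image ofFn) ?_
  rintro D ⟨rfl, hD⟩
  exact ⟨fun i => D[i], fun i => hD.mem_Icc (getElem_mem _), ofFn_getElem⟩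

theorem T_one : T 1 = 1 := by
  have : Unique {D : List ℤ // D.length = 1 ∧ IsGameWalk D} := {
    default := ⟨[1], rfl, by simp, fun k hk hk' => by
      rw [length_singleton] at hk'
      obtain rfl : k = 1 := by omega
      rfl, rfl⟩
    uniq := by
      rintro ⟨D, hlen, -, -, hsum⟩
      obtain ⟨d, rfl⟩ := length_eq_one_iff.mp hlen
      obtain rfl : d = 1 := by simpa using hsum
      rfl }
  exact Nat.card_unique

theorem isGameWalk_flatten_append {L : List (List ℤ)} (hL : ∀ W ∈ L, IsGameWalk W)
    (h4 : 4 ≤ L.length) : IsGameWalk (L.flatten ++ [1 - (L.length : ℤ)]) := by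
  have hsum := sum_flatten_of_sum_eq_one fun W hW => (hL W hW).2.2
  refine ⟨?_, PrefixSumsPos.append_singleton_iff.mpr
    ⟨.flatten fun W hW => (hL W hW).2, by omega⟩, by simp [hsum]⟩
  simp only [mem_append, mem_flatten, mem_singleton]
  rintro d (⟨W, hW, hd⟩ | rfl)
  · exact (hL W hW).1 d hd
  · right; omega

theorem IsGameWalk.exists_flatten_append {D : List ℤ} (hD : IsGameWalk D) (hlen : 2 ≤ D.length) :
    ∃ L : List (List ℤ), (∀ W ∈ L, IsGameWalk W) ∧ 4 ≤ L.length ∧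
      L.flatten ++ [1 - (L.length : ℤ)] = D := by
  obtain ⟨hstep, hpos, hsum⟩ := hD
  obtain ⟨P, d, rfl⟩ := (eq_nil_or_concat' D).resolve_left (by rintro rfl; simp at hlen)
  rw [length_append, length_singleton] at hlen
  obtain ⟨hPpos, -⟩ := PrefixSumsPos.append_singleton_iff.mp hpos
  rw [sum_append, sum_singleton] at hsum
  have hP : 1 ≤ P.sum := by simpa using hPpos P.length (by omega) le_rfl
  have hd : d ≤ -3 := (hstep d (by simp)).resolve_left (by omega)
  have hPstep : ∀ x ∈ P, x = 1 ∨ x ≤ -3 := fun x hx => hstep x (mem_append_left _ hx)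
  obtain ⟨L, hLlen, hL, rfl⟩ := exists_flatten_eq_of_prefixSumsPos (k := P.sum.toNat) (by omega)
    (fun x hx => by rcases hPstep x hx with h | h <;> omega) hPpos (by omega)
  refine ⟨L, fun W hW => ⟨fun x hx => hPstep x (mem_flatten_of_mem hW hx), hL W hW⟩,
    by omega, ?_⟩
  rw [hLlen]
  congr
  omega

def joinWalks (n : ℕ) :
    (Σ c : {c : Composition n // 4 ≤ c.length},
      {L : List (List ℤ) // L.map length = c.1.blocks ∧ ∀ W ∈ L, IsGameWalk W}) →
    {D : List ℤ // D.length = n + 1 ∧ IsGameWalk D}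
  | ⟨⟨c, hc⟩, L, hlen, hL⟩ => ⟨L.flatten ++ [1 - (L.length : ℤ)], by simp [hlen, c.blocks_sum],
      isGameWalk_flatten_append hL (by rwa [← length_map, hlen])⟩

theorem joinWalks_bijective {n : ℕ} (hn : 1 ≤ n) : Function.Bijective (joinWalks n) := by
  constructor
  · rintro ⟨⟨c, hc⟩, L, hlen, hL⟩ ⟨⟨c', hc'⟩, L', hlen', hL'⟩ h
    obtain ⟨hflat, -⟩ := append_inj' (congrArg Subtype.val h) rfl
    obtain rfl := eq_of_flatten_eq_of_sum_eq_one (fun W hW => (hL W hW).2)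
      (fun W hW => (hL' W hW).2) hflat
    obtain rfl : c = c' := Composition.ext (hlen.symm.trans hlen')
    rfl
  · rintro ⟨D, hlen, hD⟩
    obtain ⟨L, hL, h4, rfl⟩ := hD.exists_flatten_append (by omega)
    have hpos : ∀ {m}, m ∈ L.map length → 0 < m := by
      rintro _ hm
      obtain ⟨W, hW, rfl⟩ := mem_map.mp hm
      exact length_pos_iff.mpr (by rintro rfl; simpa using (hL _ hW).2.2)
    exact ⟨⟨⟨⟨L.map length, hpos, by simpa using hlen⟩, by simpa [Composition.length] using h4⟩,
      L, rfl, hL⟩, rfl⟩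

theorem T_succ {n : ℕ} (hn : 1 ≤ n) :
    T (n + 1) = ∑ c : Composition n, if 4 ≤ c.length then (c.blocks.map T).prod else 0 := by
  rw [T, ← Nat.card_eq_of_bijective _ (joinWalks_bijective hn), Nat.card_sigma,
    ← Finset.sum_filter, Finset.sum_subtype (p := fun c : Composition n => 4 ≤ c.length) _
      fun c => by simp]
  simp only [card_listsOfLengths]
  rfl

theorem gameWalk_count_recurrence :
    T 1 = 1 ∧ ∀ m, 2 ≤ m →
      T m = ∑ c : Composition (m - 1),
        if 4 ≤ c.length then (c.blocks.map T).prod else 0 := by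
  refine ⟨T_one, fun m hm => ?_⟩
  obtain ⟨n, rfl⟩ := Nat.exists_eq_add_of_le' hm
  exact T_succ (by omega)
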